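/- Let M be a finite set of items, v_1,…,v_n valuations on M, and N' ⊆ {1,…,n} a set of bidders. Let A = (A_1,…,A_n) be an allocation supported by prices q : M → ℝ≥0, let p : M → ℝ≥0 be item prices with q_j ≥ 2·p_j for every item j ∈ ∪_{i∈N'} A_i, and let (T_i)_{i∈N'} be an outcome of the fixed-price auction with prices p run on the bidders of N' in some fixed order. Let W = (∪_{i∈N'} A_i) ∖ (∪_{i∈N'} T_i) be the set of items allocated in A to bidders of N' but not allocated in the auction. Then Σ_{i∈N'} v_i(T_i) ≥ (Σ_{j∈W} q_j)/2. -/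

import Mathlib

open Finset

/-- `IsFixedPriceOutcome M v p L S` says that the allocation `S` is an outcome of the
fixed-price auction with item prices `p` over the items `M`, run on the bidders listed in `L`
(in that order): bidders not in `L` get nothing, and each bidder in turn takes, among the items
still available, a bundle maximizing her value minus the posted prices. -/
def IsFixedPriceOutcome {ι : Type*} [DecidableEq ι] {n : ℕ} (M : Finset ι)
    (v : Fin n → Finset ι → ℝ) (p : ι → ℝ) (L : List (Fin n)) (S : Fin n → Finset ι) : Prop :=
  (∀ i, i ∉ L → S i = ∅) ∧
  ∀ t : Fin L.length,
    S (L.get t) ⊆ M \ ((L.take t).foldr (fun i acc => S i ∪ acc) ∅) ∧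
    ∀ B ⊆ M \ ((L.take t).foldr (fun i acc => S i ∪ acc) ∅),
      v (L.get t) B - ∑ j ∈ B, p j ≤ v (L.get t) (S (L.get t)) - ∑ j ∈ S (L.get t), p j

/-!
Write `W` for the items of `⋃_{i ∈ N'} A i` that nobody takes in the auction. When bidder
`i ∈ N'` moves, every item of `A i ∩ W` is still available, so she could have bought that
bundle. By support it is worth at least its `q`-price to her, while its `p`-price is at most half
of that, so her utility `v i (T i) - p(T i)` is at least `q(A i ∩ W) / 2`; as prices are
nonnegative, so is `v i (T i)`. Summing over the disjoint bundles `A i ∩ W` gives the claim.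
-/

theorem List.foldr_union_eq_biUnion_toFinset {κ ι : Type*} [DecidableEq κ] [DecidableEq ι]
    (S : κ → Finset ι) (l : List κ) :
    l.foldr (fun i acc => S i ∪ acc) ∅ = l.toFinset.biUnion S := by
  induction l with
  | nil => simp
  | cons a l ih => simp [ih]

namespace IsFixedPriceOutcome

variable {ι : Type*} [DecidableEq ι] {n : ℕ} {M : Finset ι} {v : Fin n → Finset ι → ℝ}
  {p : ι → ℝ} {L : List (Fin n)} {S : Fin n → Finset ι}

theorem subset_items (hS : IsFixedPriceOutcome M v p L S) (i : Fin n) : S i ⊆ M := by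
  by_cases hi : i ∈ L
  · obtain ⟨t, rfl⟩ := List.mem_iff_get.mp hi
    exact (hS.2 t).1.trans sdiff_subset
  · simp [hS.1 i hi]

theorem utility_le_of_disjoint (hS : IsFixedPriceOutcome M v p L S) {i : Fin n} (hi : i ∈ L)
    {B : Finset ι} (hBM : B ⊆ M) (hB : Disjoint B (L.toFinset.biUnion S)) :
    v i B - ∑ j ∈ B, p j ≤ v i (S i) - ∑ j ∈ S i, p j := by
  obtain ⟨t, rfl⟩ := List.mem_iff_get.mp hi
  refine (hS.2 t).2 B (subset_sdiff.mpr ⟨hBM, ?_⟩)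
  rw [List.foldr_union_eq_biUnion_toFinset]
  exact hB.mono_right (biUnion_subset_biUnion_of_subset_left S
    fun _ hk => List.mem_toFinset.mpr (List.mem_of_mem_take (List.mem_toFinset.mp hk)))

end IsFixedPriceOutcome

theorem half_sum_le_of_utility_le {ι : Type*} {B T : Finset ι} {p q : ι → ℝ} {vB vT : ℝ}
    (hutil : vB - ∑ j ∈ B, p j ≤ vT - ∑ j ∈ T, p j) (hsupp : ∑ j ∈ B, q j ≤ vB)
    (hqp : ∀ j ∈ B, 2 * p j ≤ q j) (hpT : 0 ≤ ∑ j ∈ T, p j) :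
    (∑ j ∈ B, q j) / 2 ≤ vT := by
  have hpB : 2 * ∑ j ∈ B, p j ≤ ∑ j ∈ B, q j := by
    rw [mul_sum]
    exact sum_le_sum hqp
  linarith

theorem stmt_3_general {ι : Type*} [DecidableEq ι] {n : ℕ} (M : Finset ι)
    (v : Fin n → Finset ι → ℝ)
    (A : Fin n → Finset ι) (hAM : ∀ i, A i ⊆ M)
    (hAdisj : ∀ i k, i ≠ k → Disjoint (A i) (A k))
    (q : ι → ℝ)
    (hsupp : ∀ i, ∀ B ⊆ A i, ∑ j ∈ B, q j ≤ v i B)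
    (N' : Finset (Fin n))
    (p : ι → ℝ) (hp : ∀ j ∈ M, 0 ≤ p j)
    (hqp : ∀ j ∈ N'.biUnion A, 2 * p j ≤ q j)
    (L : List (Fin n)) (hLN : ∀ i, i ∈ L ↔ i ∈ N')
    (T : Fin n → Finset ι)
    (hT : IsFixedPriceOutcome M v p L T) :
    (∑ j ∈ N'.biUnion A \ N'.biUnion T, q j) / 2 ≤ ∑ i ∈ N', v i (T i) := by
  set W := N'.biUnion A \ N'.biUnion T
  have hL : L.toFinset = N' := by ext i; simp [hLN]
  have hW : ∑ j ∈ W, q j = ∑ i ∈ N', ∑ j ∈ A i ∩ W, q j := by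
    rw [← sum_biUnion fun i _ k _ hik => (hAdisj i k hik).mono inter_subset_left inter_subset_left,
      ← biUnion_inter, inter_eq_right.mpr sdiff_subset]
  have hbidder : ∀ i ∈ N', (∑ j ∈ A i ∩ W, q j) / 2 ≤ v i (T i) := by
    intro i hi
    refine half_sum_le_of_utility_le ?_ (hsupp i _ inter_subset_left)
      (fun j hj => hqp j (mem_sdiff.mp (mem_of_mem_inter_right hj)).1)
      (sum_nonneg fun j hj => hp j (hT.subset_items i hj))
    refine hT.utility_le_of_disjoint ((hLN i).mpr hi) (inter_subset_left.trans (hAM i)) ?_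
    rw [hL]
    exact sdiff_disjoint.mono_left inter_subset_right
  rw [hW, sum_div]
  exact sum_le_sum hbidder

/-- **Claim 4.4.** Let `A = (A 1, …, A n)` be an allocation supported by prices `q`, let `p` be
item prices with `q j ≥ 2 * p j` for every item `j ∈ ⋃_{i ∈ N'} A i`, and let `(T i)_{i ∈ N'}`
be an outcome of the fixed-price auction with prices `p` run on the bidders of `N'` in some
fixed order.  Let `W = (⋃_{i ∈ N'} A i) \ (⋃_{i ∈ N'} T i)` be the set of items allocated in
`A` to bidders of `N'` but not allocated in the auction.  Then
`∑_{i ∈ N'} v i (T i) ≥ (∑_{j ∈ W} q j) / 2`. -/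
theorem stmt_3 {ι : Type*} [DecidableEq ι] {n : ℕ} (M : Finset ι)
    (v : Fin n → Finset ι → ℝ)
    (hv0 : ∀ i, v i ∅ = 0)
    (hvmono : ∀ i ⦃S T : Finset ι⦄, S ⊆ T → T ⊆ M → v i S ≤ v i T)
    (A : Fin n → Finset ι) (hAM : ∀ i, A i ⊆ M)
    (hAdisj : ∀ i k, i ≠ k → Disjoint (A i) (A k))
    (q : ι → ℝ) (hq : ∀ j ∈ M, 0 ≤ q j)
    (hsupp : ∀ i, ∀ B ⊆ A i, ∑ j ∈ B, q j ≤ v i B)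
    (N' : Finset (Fin n))
    (p : ι → ℝ) (hp : ∀ j ∈ M, 0 ≤ p j)
    (hqp : ∀ j ∈ N'.biUnion A, 2 * p j ≤ q j)
    (L : List (Fin n)) (hnd : L.Nodup) (hLN : ∀ i, i ∈ L ↔ i ∈ N')
    (T : Fin n → Finset ι)
    (hT : IsFixedPriceOutcome M v p L T) :
    (∑ j ∈ N'.biUnion A \ N'.biUnion T, q j) / 2 ≤ ∑ i ∈ N', v i (T i) :=
  stmt_3_general M v A hAM hAdisj q hsupp N' p hp hqp L hLN T hT
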